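/- For a finite connected directed weighted graph G satisfying the Kirchhoff assumption, with the normalized choice of vertex weight m = β⁺ (assuming β⁺(x) > 0 for all x), every eigenvalue of the normalized operator S̃_G = Δ̃_G + Δ̃*_G lies in the interval [0,4]. -/

import Mathlib

/-! For an eigenpair `S f = μ f` we get `μ (f, f) = (Δf, f) + (f, Δf) = 2 Re (Δf, f)`, and the
Kirchhoff assumption turns `2 Re (Δf, f)` into the energy `∑ b(x,y) |f x - f y|²`. The energy is
nonnegative, and `|a - c|² ≤ 2|a|² + 2|c|²` together with Kirchhoff once more bounds it by
`4 ∑ β⁺(x) |f x|² = 4 (f, f)`. -/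

open Finset

noncomputable def innerM {V : Type*} [Fintype V] (m : V → ℝ) (f g : V → ℂ) : ℂ :=
  ∑ x, (m x : ℂ) * f x * (starRingEnd ℂ) (g x)

noncomputable def lapDelta {V : Type*} [Fintype V] (m : V → ℝ) (b : V → V → ℝ)
    (f : V → ℂ) (x : V) : ℂ :=
  (1 / (m x : ℂ)) * ∑ y, ((b x y : ℝ) : ℂ) * (f x - f y)

section WeightedInner

variable {V : Type*} [Fintype V]

lemma innerM_conj (m : V → ℝ) (f g : V → ℂ) :
    innerM m f g = starRingEnd ℂ (innerM m g f) := by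
  simp only [innerM, map_sum, map_mul, Complex.conj_conj, Complex.conj_ofReal]
  exact sum_congr rfl fun x _ => by ring

lemma innerM_add_left (m : V → ℝ) (f₁ f₂ g : V → ℂ) :
    innerM m (f₁ + f₂) g = innerM m f₁ g + innerM m f₂ g := by
  simp only [innerM, Pi.add_apply, ← sum_add_distrib]
  exact sum_congr rfl fun x _ => by ring

lemma innerM_const_mul_left (m : V → ℝ) (c : ℂ) (f g : V → ℂ) :
    innerM m (fun x => c * f x) g = c * innerM m f g := by
  simp only [innerM, mul_sum]
  exact sum_congr rfl fun x _ => by ring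

lemma innerM_self (m : V → ℝ) (f : V → ℂ) :
    innerM m f f = ((∑ x, m x * ‖f x‖ ^ 2 : ℝ) : ℂ) := by
  simp only [innerM, mul_assoc, Complex.mul_conj', Complex.ofReal_sum, Complex.ofReal_mul,
    Complex.ofReal_pow]

lemma sum_mul_norm_sq_pos {m : V → ℝ} (hm : ∀ x, 0 < m x) {f : V → ℂ} (hf : f ≠ 0) :
    0 < ∑ x, m x * ‖f x‖ ^ 2 := by
  obtain ⟨x₀, hx₀⟩ := Function.ne_iff.mp hf
  exact sum_pos' (fun x _ => mul_nonneg (hm x).le (sq_nonneg _))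
    ⟨x₀, mem_univ _, mul_pos (hm x₀) (pow_pos (norm_pos_iff.mpr hx₀) 2)⟩

end WeightedInner

section Kirchhoff

variable {V : Type*} [Fintype V] {b : V → V → ℝ}

lemma sum_sum_mul_apply_right_eq_left (hkirch : ∀ x, ∑ y, b x y = ∑ y, b y x) (g : V → ℝ) :
    ∑ x, ∑ y, b x y * g y = ∑ x, ∑ y, b x y * g x := by
  simp only [← sum_mul]
  rw [sum_comm]
  simp only [← sum_mul, hkirch]

lemma innerM_lapDelta_self {m : V → ℝ} (hm : ∀ x, m x ≠ 0) (f : V → ℂ) :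
    innerM m (lapDelta m b f) f =
      ∑ x, ∑ y, (b x y : ℂ) * ((f x - f y) * starRingEnd ℂ (f x)) := by
  refine sum_congr rfl fun x _ => ?_
  have hmx : (m x : ℂ) ≠ 0 := Complex.ofReal_ne_zero.mpr (hm x)
  rw [lapDelta, ← mul_assoc, mul_one_div_cancel hmx, one_mul, sum_mul]
  exact sum_congr rfl fun y _ => by ring

lemma re_innerM_lapDelta_self {m : V → ℝ} (hm : ∀ x, m x ≠ 0)
    (hkirch : ∀ x, ∑ y, b x y = ∑ y, b y x) (f : V → ℂ) :
    (innerM m (lapDelta m b f) f).re = (∑ x, ∑ y, b x y * ‖f x - f y‖ ^ 2) / 2 := by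
  have hpolar : ∀ a c : ℂ,
      ((a - c) * starRingEnd ℂ a).re = (‖a - c‖ ^ 2 + ‖a‖ ^ 2 - ‖c‖ ^ 2) / 2 := by
    intro a c
    simp only [← Complex.normSq_eq_norm_sq, Complex.normSq_apply, Complex.mul_re,
      Complex.sub_re, Complex.sub_im, Complex.conj_re, Complex.conj_im]
    ring
  have hdiag := sum_sum_mul_apply_right_eq_left hkirch fun x => ‖f x‖ ^ 2
  calc (innerM m (lapDelta m b f) f).re
      = ∑ x, ∑ y, b x y * ((f x - f y) * starRingEnd ℂ (f x)).re := by
        simp only [innerM_lapDelta_self hm, Complex.re_sum, Complex.re_ofReal_mul]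
    _ = ∑ x, ∑ y, (b x y * ‖f x - f y‖ ^ 2 + b x y * ‖f x‖ ^ 2 - b x y * ‖f y‖ ^ 2) / 2 := by
        simp only [hpolar]
        exact sum_congr rfl fun x _ => sum_congr rfl fun y _ => by ring
    _ = (∑ x, ∑ y, b x y * ‖f x - f y‖ ^ 2 + ∑ x, ∑ y, b x y * ‖f x‖ ^ 2
          - ∑ x, ∑ y, b x y * ‖f y‖ ^ 2) / 2 := by
        simp only [← sum_div, sum_add_distrib, sum_sub_distrib]
    _ = (∑ x, ∑ y, b x y * ‖f x - f y‖ ^ 2) / 2 := by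
        -- Kirchhoff: the two diagonal sums cancel
        rw [hdiag, add_sub_cancel_right]

lemma sum_sum_mul_norm_sub_sq_le (hb : ∀ x y, 0 ≤ b x y)
    (hkirch : ∀ x, ∑ y, b x y = ∑ y, b y x) (f : V → ℂ) :
    ∑ x, ∑ y, b x y * ‖f x - f y‖ ^ 2 ≤ 4 * ∑ x, (∑ y, b x y) * ‖f x‖ ^ 2 := by
  have hdiag := sum_sum_mul_apply_right_eq_left hkirch fun x => ‖f x‖ ^ 2
  calc ∑ x, ∑ y, b x y * ‖f x - f y‖ ^ 2
      ≤ ∑ x, ∑ y, b x y * (2 * ‖f x‖ ^ 2 + 2 * ‖f y‖ ^ 2) := by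
        refine sum_le_sum fun x _ => sum_le_sum fun y _ => mul_le_mul_of_nonneg_left ?_ (hb x y)
        nlinarith [norm_sub_le (f x) (f y), norm_nonneg (f x - f y),
          sq_nonneg (‖f x‖ - ‖f y‖)]
    _ = 2 * ∑ x, ∑ y, b x y * ‖f x‖ ^ 2 + 2 * ∑ x, ∑ y, b x y * ‖f y‖ ^ 2 := by
        simp only [mul_sum, ← sum_add_distrib]
        exact sum_congr rfl fun x _ => sum_congr rfl fun y _ => by ring
    _ = 4 * ∑ x, (∑ y, b x y) * ‖f x‖ ^ 2 := by
        rw [hdiag]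
        simp only [sum_mul]
        ring

end Kirchhoff

theorem stmt7_general {V : Type*} [Fintype V] (b : V → V → ℝ)
    (hb : ∀ x y, 0 ≤ b x y)
    (hkirch : ∀ x, ∑ y, b x y = ∑ y, b y x)
    (hpos : ∀ x, 0 < ∑ y, b x y)
    (T : (V → ℂ) → (V → ℂ))
    (hT : ∀ f g : V → ℂ,
      innerM (fun x => ∑ y, b x y) (lapDelta (fun x => ∑ y, b x y) b f) g =
        innerM (fun x => ∑ y, b x y) f (T g))
    (S : (V → ℂ) → (V → ℂ))
    (hS : ∀ f x, S f x = lapDelta (fun x => ∑ y, b x y) b f x + T f x) :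
    ∀ mu : ℂ, (∃ f : V → ℂ, f ≠ 0 ∧ S f = fun x => mu * f x) →
      mu.im = 0 ∧ 0 ≤ mu.re ∧ mu.re ≤ 4 := by
  rintro mu ⟨f, hf0, hfe⟩
  set m : V → ℝ := fun x => ∑ y, b x y
  set E := ∑ x, ∑ y, b x y * ‖f x - f y‖ ^ 2
  set N := ∑ x, m x * ‖f x‖ ^ 2
  have hN : 0 < N := sum_mul_norm_sq_pos hpos hf0
  have hE0 : 0 ≤ E := sum_nonneg fun x _ => sum_nonneg fun y _ => mul_nonneg (hb x y) (sq_nonneg _)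
  have hE4 : E ≤ 4 * N := sum_sum_mul_norm_sub_sq_le hb hkirch f
  have hRayleigh : mu * N = E :=
    calc mu * N = innerM m (S f) f := by rw [hfe, innerM_const_mul_left, innerM_self]
      _ = innerM m (lapDelta m b f) f + starRingEnd ℂ (innerM m (lapDelta m b f) f) := by
        rw [show S f = lapDelta m b f + T f from funext (hS f), innerM_add_left,
          innerM_conj m (T f), ← hT]
      _ = E := by
        rw [Complex.add_conj, re_innerM_lapDelta_self (fun x => (hpos x).ne') hkirch,
          mul_div_cancel₀ _ two_ne_zero]
  obtain ⟨hre, him⟩ : mu.re * N = E ∧ mu.im = 0 := by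
    simpa [Complex.ext_iff, hN.ne'] using hRayleigh
  exact ⟨him, by nlinarith, by nlinarith⟩

/-- for a finite connected directed weighted graph satisfying the Kirchhoff
assumption, with the normalized vertex weight `m = β⁺` (each `β⁺(x) > 0`), every eigenvalue
of the normalized operator `S̃ = Δ̃ + Δ̃*` (with `Δ̃*` the adjoint of `Δ̃` w.r.t.
`(·,·)_{β⁺}`) lies in `[0,4]` (in particular it is real). -/
theorem stmt7 {V : Type*} [Fintype V] (b : V → V → ℝ)
    (hb : ∀ x y, 0 ≤ b x y) (hloop : ∀ x, b x x = 0)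
    (hconn : ∀ x y : V, Relation.ReflTransGen (fun u v => 0 < b u v ∨ 0 < b v u) x y)
    (hkirch : ∀ x, ∑ y, b x y = ∑ y, b y x)
    (hpos : ∀ x, 0 < ∑ y, b x y)
    (T : (V → ℂ) → (V → ℂ))
    (hT : ∀ f g : V → ℂ,
      innerM (fun x => ∑ y, b x y) (lapDelta (fun x => ∑ y, b x y) b f) g =
        innerM (fun x => ∑ y, b x y) f (T g))
    (S : (V → ℂ) → (V → ℂ))
    (hS : ∀ f x, S f x = lapDelta (fun x => ∑ y, b x y) b f x + T f x) :
    ∀ mu : ℂ, (∃ f : V → ℂ, f ≠ 0 ∧ S f = fun x => mu * f x) →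
      mu.im = 0 ∧ 0 ≤ mu.re ∧ mu.re ≤ 4 :=
  stmt7_general b hb hkirch hpos T hT S hS
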